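/- (Thicket Sauer-Shelah lemma) Let (X,𝓕) be a set system with thicket dimension at most k (k a natural number). Then for every n, the thicket shatter function satisfies ρ(n) ≤ ∑_{i=0}^{k} C(n,i), where ρ(n) is the maximum number of realized leaves over 𝓕 in any X-labeled complete balanced binary tree of depth n. -/

import Mathlib

/-- A leaf `v` (a binary string) of an `X`-labeled tree with labeling `lab` is
realized by `F` if, for every proper prefix `u` of `v`, the label of `u` lies
in `F` iff the bit of `v` following `u` is `false` (left). -/
def RealizedBy {X : Type*} (lab : List Bool → X) (v : List Bool) (F : Set X) : Prop :=
  ∀ i : Fin v.length, (lab (v.take i) ∈ F ↔ v.get i = false)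

/-- There is a full `X`-labeled complete balanced binary tree of depth `n` over `𝓕`:
a labeling of strings (internal vertices are those of length `< n`) such that every
leaf (string of length `n`) is realized by some member of `𝓕`. -/
def FullTree {X : Type*} (𝓕 : Set (Set X)) (n : ℕ) : Prop :=
  ∃ lab : List Bool → X, ∀ v : List Bool, v.length = n → ∃ F ∈ 𝓕, RealizedBy lab v F

/-- The thicket dimension: the supremum of depths of full trees, with value `⊥`
(representing `-1`) for the empty family and `⊤` (representing `ω`) when there
are arbitrarily deep full trees. -/
noncomputable def thicketDim {X : Type*} (𝓕 : Set (Set X)) : WithBot ℕ∞ :=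
  sSup {d : WithBot ℕ∞ | ∃ n : ℕ, FullTree 𝓕 n ∧ d = ((n : ℕ∞) : WithBot ℕ∞)}

/-- The thicket shatter function `ρ(n)`: the maximum, over all `X`-labelings,
of the number of leaves of the complete balanced binary tree of depth `n`
realized over `𝓕`. -/
noncomputable def shatterFn {X : Type*} (𝓕 : Set (Set X)) (n : ℕ) : ℕ∞ :=
  ⨆ lab : List Bool → X,
    (Nat.card {v : Fin n → Bool // ∃ F ∈ 𝓕, RealizedBy lab (List.ofFn v) F} : ℕ∞)


/-!
Induction on the depth `n`. Splitting the realized leaves of a tree by their first bit `b`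
identifies each half with the realized leaves of the subtree below the root, over the
subfamily `branch 𝓕 x b` of sets that send the root label `x` to `b`. Neither subfamily has a
full tree of depth `k + 1`, and they cannot both have one of depth `k`, since gluing two such
trees under a root labelled `x` gives a full tree of depth `k + 1` over `𝓕`. Pascal's rule
for partial sums of binomial coefficients closes the induction.
-/

section

variable {X : Type*}

lemma realizedBy_cons (lab : List Bool → X) (b : Bool) (v : List Bool) (F : Set X) :
    RealizedBy lab (b :: v) F ↔
      ((lab [] ∈ F ↔ b = false) ∧ RealizedBy (fun u => lab (b :: u)) v F) := by
  constructor
  · intro h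
    exact ⟨by simpa using h ⟨0, by simp⟩, fun i => by simpa using h i.succ⟩
  · rintro ⟨hroot, h⟩ i
    cases i using Fin.cases with
    | zero => simpa using hroot
    | succ i => simpa using h i

def branch (𝓕 : Set (Set X)) (x : X) (b : Bool) : Set (Set X) :=
  {F ∈ 𝓕 | x ∈ F ↔ b = false}

def realizedLeaves (𝓕 : Set (Set X)) (lab : List Bool → X) (n : ℕ) : Set (Fin n → Bool) :=
  {v | ∃ F ∈ 𝓕, RealizedBy lab (List.ofFn v) F}

lemma cons_mem_realizedLeaves_iff (𝓕 : Set (Set X)) (lab : List Bool → X) {n : ℕ}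
    (b : Bool) (v : Fin n → Bool) :
    Fin.cons b v ∈ realizedLeaves 𝓕 lab (n + 1) ↔
      v ∈ realizedLeaves (branch 𝓕 (lab []) b) (fun u => lab (b :: u)) n := by
  simp only [realizedLeaves, branch, List.ofFn_succ, Fin.cons_zero, Fin.cons_succ,
    realizedBy_cons, Set.mem_ofPred_eq, and_assoc]

lemma card_realizedLeaves_succ (𝓕 : Set (Set X)) (lab : List Bool → X) (n : ℕ) :
    Nat.card (realizedLeaves 𝓕 lab (n + 1)) =
      ∑ b : Bool, Nat.card (realizedLeaves (branch 𝓕 (lab []) b) (fun u => lab (b :: u)) n) := by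
  rw [← Nat.card_sigma]
  refine Nat.card_congr (((Fin.consEquiv fun _ => Bool).symm.subtypeEquiv ?_).trans
    (Equiv.subtypeProdEquivSigmaSubtype fun b v => _))
  intro v
  rw [← Fin.cons_self_tail v, cons_mem_realizedLeaves_iff]
  rfl

lemma FullTree.mono {𝓕 𝓖 : Set (Set X)} (h : 𝓕 ⊆ 𝓖) {n : ℕ} (hF : FullTree 𝓕 n) :
    FullTree 𝓖 n := by
  obtain ⟨lab, hlab⟩ := hF
  refine ⟨lab, fun v hv => ?_⟩
  obtain ⟨F, hF, hv⟩ := hlab v hv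
  exact ⟨F, h hF, hv⟩

lemma fullTree_succ_of_branch (𝓕 : Set (Set X)) (x : X) {n : ℕ}
    (h : ∀ b, FullTree (branch 𝓕 x b) n) : FullTree 𝓕 (n + 1) := by
  choose lab hlab using h
  refine ⟨fun | [] => x | b :: u => lab b u, fun v hv => ?_⟩
  obtain _ | ⟨b, v⟩ := v
  · simp at hv
  obtain ⟨F, ⟨hF, hroot⟩, hv⟩ := hlab b v (by simpa using hv)
  exact ⟨F, hF, (realizedBy_cons _ _ _ _).2 ⟨hroot, hv⟩⟩

lemma realizedLeaves_eq_empty_of_not_fullTree_zero {𝓕 : Set (Set X)} (h : ¬ FullTree 𝓕 0)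
    (lab : List Bool → X) (n : ℕ) : realizedLeaves 𝓕 lab n = ∅ := by
  refine Set.eq_empty_of_forall_notMem fun v ⟨F, hF, _⟩ => h ?_
  exact ⟨lab, fun v hv => ⟨F, hF, fun i => absurd i.2 (by omega)⟩⟩

lemma FullTree.le_thicketDim {𝓕 : Set (Set X)} {n : ℕ} (h : FullTree 𝓕 n) :
    ((n : ℕ∞) : WithBot ℕ∞) ≤ thicketDim 𝓕 :=
  le_sSup ⟨n, h, rfl⟩

lemma sum_range_choose_succ_eq (n k : ℕ) :
    ∑ i ∈ Finset.range (k + 1), (n + 1).choose i =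
      ∑ i ∈ Finset.range (k + 1), n.choose i + ∑ i ∈ Finset.range k, n.choose i := by
  simp only [Finset.sum_range_succ', Nat.choose_succ_succ', Finset.sum_add_distrib,
    Nat.choose_zero_right]
  ring

lemma card_realizedLeaves_le (n : ℕ) :
    ∀ (k : ℕ) (𝓕 : Set (Set X)) (lab : List Bool → X), ¬ FullTree 𝓕 k →
      Nat.card (realizedLeaves 𝓕 lab n) ≤ ∑ i ∈ Finset.range k, n.choose i := by
  induction n with
  | zero =>
    rintro (_ | k) 𝓕 lab hk
    · simp [realizedLeaves_eq_empty_of_not_fullTree_zero hk]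
    calc Nat.card (realizedLeaves 𝓕 lab 0) ≤ Nat.card (Fin 0 → Bool) := Finite.card_subtype_le _
      _ = 1 := by simp
      _ ≤ _ := by simp [Finset.sum_range_succ']
  | succ n ih =>
    rintro (_ | k) 𝓕 lab hk
    · simp [realizedLeaves_eq_empty_of_not_fullTree_zero hk]
    have hdeep : ∀ b, ¬ FullTree (branch 𝓕 (lab []) b) (k + 1) :=
      fun b h => hk (h.mono (Set.sep_subset _ _))
    have hshallow : ∃ b, ¬ FullTree (branch 𝓕 (lab []) b) k := by
      by_contra! h
      exact hk (fullTree_succ_of_branch 𝓕 (lab []) h)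
    have hbranch (b : Bool) (j : ℕ) (h : ¬ FullTree (branch 𝓕 (lab []) b) j) :=
      ih j _ (fun u => lab (b :: u)) h
    rw [card_realizedLeaves_succ, Fintype.sum_bool, sum_range_choose_succ_eq]
    obtain ⟨_ | _, hb⟩ := hshallow
    · have := hbranch true _ (hdeep true)
      have := hbranch false _ hb
      omega
    · have := hbranch true _ hb
      have := hbranch false _ (hdeep false)
      omega

end

/-- Thicket Sauer-Shelah lemma: if the thicket dimension of `(X,𝓕)` is at most
`k`, then `ρ(n) ≤ ∑_{i=0}^{k} C(n,i)` for every `n`. -/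
theorem thicket_sauer_shelah {X : Type*} (𝓕 : Set (Set X)) (k : ℕ)
    (hdim : thicketDim 𝓕 ≤ ((k : ℕ∞) : WithBot ℕ∞)) (n : ℕ) :
    shatterFn 𝓕 n ≤ ((∑ i ∈ Finset.range (k + 1), n.choose i : ℕ) : ℕ∞) := by
  have hk : ¬ FullTree 𝓕 (k + 1) := fun h => by
    have := h.le_thicketDim.trans hdim
    rw [WithBot.coe_le_coe, Nat.cast_le] at this
    omega
  refine iSup_le fun lab => ?_
  exact_mod_cast card_realizedLeaves_le n (k + 1) 𝓕 lab hk
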